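/- Let K be an integral domain of characteristic zero, and let φ and f be formal power series over K such that the constant coefficient of φ is nonzero, the constant coefficient of f is zero, and the x^1-coefficient of f is nonzero. Let f̄ be the compositional inverse of f (i.e., f̄ has zero constant term and f(f̄(x)) = f̄(f(x)) = x), and assume f̄(x) = x·φ(f̄(x)). Then for all integers n ≥ 1 and l ≥ 0 with n ≥ l, n·[x^n] f̄(x)^l = l·[x^{n-l}] φ(x)^n. -/

import Mathlib

/-- Composition `g(h(x))` of formal power series, defined coefficientwise by
`[x^n] g(h(x)) = Σ_{i=0}^{n} g_i · [x^n] h(x)^i` (valid when `h` has zero constant term). -/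
noncomputable def psComp {K : Type*} [CommRing K] (g h : PowerSeries K) : PowerSeries K :=
  PowerSeries.mk fun n =>
    ∑ i ∈ Finset.range (n + 1), (PowerSeries.coeff i g) * (PowerSeries.coeff n (h ^ i))

/-! Over the fraction field put `Φ = φ ∘ f̄` and `ψ = Φ⁻¹`, so that `f̄ ψ = x`. Differentiating,
`n [x^n] f̄^l = l [x^(n-1)] f̄^(l-1) f̄'`. Since `f̄^(l-1) = x^(l-1) Φ^(l-1)` and
`Φ^(l-1) = (φ^n ∘ f̄) ψ^(n-l+1)`, this coefficient equals
`Σ_k [x^k] φ^n · [x^(n-l)] f̄^k ψ^(n-l+1) f̄'`, and `f̄^k ψ^(n-l+1) = x^k ψ^(n-l-k+1)`.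
Finally `[x^c] ψ^(c+1) f̄'` is the residue of `f̄' / f̄^(c+1)`: it is `1` for `c = 0`, and `0` for
`c ≥ 1` because then `f̄' / f̄^(c+1)` is a derivative. So only `k = n - l` survives. -/

open PowerSeries Finset

section Composition

variable {R : Type*} [CommRing R]

theorem PowerSeries.coeff_pow_of_lt_of_constantCoeff_eq_zero {h : R⟦X⟧}
    (hh : constantCoeff h = 0) {n k : ℕ} (hnk : n < k) : coeff n (h ^ k) = 0 :=
  coeff_of_lt_order n <|
    (Nat.cast_lt.mpr hnk).trans_le (le_order_pow_of_constantCoeff_eq_zero k hh)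

theorem psComp_eq_subst {h : R⟦X⟧} (hh : constantCoeff h = 0) (a : R⟦X⟧) :
    psComp a h = a.subst h := by
  ext n
  rw [coeff_subst' (HasSubst.of_constantCoeff_zero' hh), psComp, coeff_mk,
    finsum_eq_sum_of_support_subset (s := range (n + 1))]
  · simp only [smul_eq_mul]
  · refine Function.support_subset_iff'.mpr fun k hk => ?_
    rw [coeff_pow_of_lt_of_constantCoeff_eq_zero hh (by simpa using hk), smul_zero]

theorem psComp_pow {h : R⟦X⟧} (hh : constantCoeff h = 0) (a : R⟦X⟧) (k : ℕ) :
    psComp (a ^ k) h = psComp a h ^ k := by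
  simp only [psComp_eq_subst hh, subst_pow (HasSubst.of_constantCoeff_zero' hh)]

theorem constantCoeff_psComp (a h : R⟦X⟧) : constantCoeff (psComp a h) = constantCoeff a := by
  rw [← coeff_zero_eq_constantCoeff_apply, ← coeff_zero_eq_constantCoeff_apply a, psComp,
    coeff_mk]
  simp

theorem PowerSeries.constantCoeff_map {S : Type*} [CommRing S] (f : R →+* S) (a : R⟦X⟧) :
    constantCoeff (map f a) = f (constantCoeff a) := by
  rw [← coeff_zero_eq_constantCoeff_apply, coeff_map, coeff_zero_eq_constantCoeff_apply]

theorem map_psComp {S : Type*} [CommRing S] (f : R →+* S) (a h : R⟦X⟧) :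
    map f (psComp a h) = psComp (map f a) (map f h) := by
  ext n
  simp [psComp, coeff_map, ← map_pow]

theorem coeff_psComp_mul {h : R⟦X⟧} (hh : constantCoeff h = 0) (a b : R⟦X⟧) (n : ℕ) :
    coeff n (psComp a h * b) = ∑ k ∈ range (n + 1), coeff k a * coeff n (h ^ k * b) := by
  have hcut : ∀ i ≤ n, ∑ k ∈ range (i + 1), coeff k a * coeff i (h ^ k) =
      ∑ k ∈ range (n + 1), coeff k a * coeff i (h ^ k) := by
    intro i hi
    refine sum_subset (range_subset_range.mpr (by omega)) fun k _ hk => ?_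
    rw [coeff_pow_of_lt_of_constantCoeff_eq_zero hh (by simpa using hk), mul_zero]
  calc coeff n (psComp a h * b)
      = ∑ p ∈ antidiagonal n,
          (∑ k ∈ range (n + 1), coeff k a * coeff p.1 (h ^ k)) * coeff p.2 b := by
        rw [coeff_mul]
        refine sum_congr rfl fun p hp => ?_
        rw [psComp, coeff_mk, hcut p.1 (HasAntidiagonal.antidiagonal.fst_le hp)]
    _ = ∑ k ∈ range (n + 1), coeff k a * coeff n (h ^ k * b) := by
        simp only [coeff_mul, sum_mul, mul_sum, mul_assoc]
        exact sum_comm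

end Composition

section Residue

variable {R : Type*} [CommRing R] [IsAddTorsionFree R] {g ψ : R⟦X⟧}

theorem coeff_pow_succ_mul_derivative (hg0 : constantCoeff g = 0) (hgψ : g * ψ = X) (c : ℕ) :
    coeff c (ψ ^ (c + 1) * d⁄dX R g) = if c = 0 then 1 else 0 := by
  have hψg' : ψ * d⁄dX R g = 1 - g * d⁄dX R ψ := by
    have h := congrArg (d⁄dX R) hgψ
    rw [Derivation.leibniz, derivative_X, smul_eq_mul, smul_eq_mul] at h
    linear_combination h
  cases c with
  | zero => simp [hψg', hg0]
  | succ c =>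
    have hsplit : ψ ^ (c + 2) * d⁄dX R g = ψ ^ (c + 1) - X * (ψ ^ c * d⁄dX R ψ) := by
      linear_combination ψ ^ (c + 1) * hψg' - ψ ^ c * d⁄dX R ψ * hgψ
    have hderiv : coeff c (ψ ^ c * d⁄dX R ψ) = coeff (c + 1) (ψ ^ (c + 1)) := by
      have h := coeff_derivative (ψ ^ (c + 1)) c
      rw [Derivation.leibniz_pow, add_tsub_cancel_right, map_nsmul, smul_eq_mul,
        nsmul_eq_mul, Nat.cast_succ] at h
      refine nsmul_right_injective (Nat.succ_ne_zero c) ?_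
      simp only [nsmul_eq_mul, Nat.cast_succ]
      linear_combination h
    rw [hsplit, map_sub, coeff_succ_X_mul, hderiv, sub_self, if_neg (Nat.succ_ne_zero c)]

theorem coeff_pow_mul_pow_mul_derivative (hg0 : constantCoeff g = 0) (hgψ : g * ψ = X)
    (k c : ℕ) :
    coeff (k + c) (g ^ k * (ψ ^ (k + c + 1) * d⁄dX R g)) = if c = 0 then 1 else 0 := by
  have h : g ^ k * (ψ ^ (k + c + 1) * d⁄dX R g) = X ^ k * (ψ ^ (c + 1) * d⁄dX R g) := by
    rw [← hgψ]; ring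
  rw [h, add_comm k c, coeff_X_pow_mul, coeff_pow_succ_mul_derivative hg0 hgψ]

end Residue

section Lagrange

variable {F : Type*} [Field F] [CharZero F] {φ g : F⟦X⟧}

theorem coeff_pow_mul_derivative_of_eq_X_mul_psComp (hφ0 : constantCoeff φ ≠ 0)
    (hg0 : constantCoeff g = 0) (hg : g = X * psComp φ g) (a b : ℕ) :
    coeff (a + b) (g ^ a * d⁄dX F g) = coeff b (φ ^ (a + b + 1)) := by
  set Φ := psComp φ g
  have hΦinv : Φ * Φ⁻¹ = 1 :=
    PowerSeries.mul_inv_cancel Φ (by rwa [constantCoeff_psComp])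
  have hgΦinv : g * Φ⁻¹ = X := by rw [hg, mul_assoc, hΦinv, mul_one]
  have hga : g ^ a = X ^ a * Φ ^ a := by rw [hg, mul_pow]
  have hsplit :
      g ^ a * d⁄dX F g = X ^ a * (Φ ^ (a + b + 1) * (Φ⁻¹ ^ (b + 1) * d⁄dX F g)) := by
    calc g ^ a * d⁄dX F g = X ^ a * (Φ ^ a * (Φ * Φ⁻¹) ^ (b + 1) * d⁄dX F g) := by
          rw [hga, hΦinv]; ring
      _ = _ := by ring
  rw [hsplit, ← psComp_pow hg0, add_comm a b, coeff_X_pow_mul, coeff_psComp_mul hg0,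
    sum_eq_single_of_mem b (self_mem_range_succ b)]
  · have h := coeff_pow_mul_pow_mul_derivative hg0 hgΦinv b 0
    rw [add_zero, if_pos rfl] at h
    rw [h, mul_one]
  · intro k hk hkb
    obtain ⟨c, rfl⟩ := Nat.exists_eq_add_of_le (mem_range_succ_iff.mp hk)
    rw [add_assoc, coeff_pow_mul_pow_mul_derivative hg0 hgΦinv, if_neg (by omega), mul_zero]

theorem natCast_mul_coeff_pow_of_eq_X_mul_psComp (hφ0 : constantCoeff φ ≠ 0)
    (hg0 : constantCoeff g = 0) (hg : g = X * psComp φ g)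
    {n l : ℕ} (hl : l ≤ n) :
    (n : F) * coeff n (g ^ l) = l * coeff (n - l) (φ ^ n) := by
  obtain _ | a := l
  · cases n <;> simp
  obtain ⟨b, rfl⟩ := Nat.exists_eq_add_of_le hl
  calc ((a + 1 + b : ℕ) : F) * coeff (a + 1 + b) (g ^ (a + 1))
      = coeff (a + b) (d⁄dX F (g ^ (a + 1))) := by
        rw [coeff_derivative, show a + b + 1 = a + 1 + b by omega]
        push_cast; ring
    _ = (a + 1 : ℕ) * coeff (a + b) (g ^ a * d⁄dX F g) := by
        rw [Derivation.leibniz_pow, map_nsmul, smul_eq_mul, nsmul_eq_mul, add_tsub_cancel_right]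
    _ = (a + 1 : ℕ) * coeff (a + 1 + b - (a + 1)) (φ ^ (a + 1 + b)) := by
        rw [coeff_pow_mul_derivative_of_eq_X_mul_psComp hφ0 hg0 hg, add_tsub_cancel_left,
          add_right_comm]

end Lagrange

theorem lif_schur_jabotinsky_phi_general {K : Type*} [CommRing K] [IsDomain K] [CharZero K]
    (φ fbar : PowerSeries K)
    (hφ0 : PowerSeries.constantCoeff φ ≠ 0)
    (hfbar0 : PowerSeries.constantCoeff fbar = 0)
    (hfe : fbar = PowerSeries.X * psComp φ fbar)
    (n l : ℕ) (hnl : l ≤ n) :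
    (n : K) * PowerSeries.coeff n (fbar ^ l) =
      (l : K) * PowerSeries.coeff (n - l) (φ ^ n) := by
  let ι := algebraMap K (FractionRing K)
  have hι : Function.Injective ι := IsFractionRing.injective K (FractionRing K)
  have hφ0' : constantCoeff (map ι φ) ≠ 0 := by
    rwa [constantCoeff_map, ne_eq, map_eq_zero_iff ι hι]
  have hg0 : constantCoeff (map ι fbar) = 0 := by rw [constantCoeff_map, hfbar0, map_zero]
  have hg : map ι fbar = X * psComp (map ι φ) (map ι fbar) := by
    rw [← map_psComp, ← map_X ι, ← map_mul, ← hfe]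
  apply hι
  simpa [coeff_map, ← map_pow] using natCast_mul_coeff_pow_of_eq_X_mul_psComp hφ0' hg0 hg hnl

/-- Schur–Jabotinsky form of the Lagrange Inversion Formula (second equality):
`n·[x^n] f̄(x)^l = l·[x^{n-l}] φ(x)^n` for `n ≥ 1`, `0 ≤ l ≤ n`. -/
theorem lif_schur_jabotinsky_phi {K : Type*} [CommRing K] [IsDomain K] [CharZero K]
    (φ f fbar : PowerSeries K)
    (hφ0 : PowerSeries.constantCoeff φ ≠ 0)
    (hf0 : PowerSeries.constantCoeff f = 0)
    (hf1 : PowerSeries.coeff 1 f ≠ 0)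
    (hfbar0 : PowerSeries.constantCoeff fbar = 0)
    (hcomp1 : psComp f fbar = PowerSeries.X)
    (hcomp2 : psComp fbar f = PowerSeries.X)
    (hfe : fbar = PowerSeries.X * psComp φ fbar)
    (n l : ℕ) (hn : 1 ≤ n) (hnl : l ≤ n) :
    (n : K) * PowerSeries.coeff n (fbar ^ l) =
      (l : K) * PowerSeries.coeff (n - l) (φ ^ n) :=
  lif_schur_jabotinsky_phi_general φ fbar hφ0 hfbar0 hfe n l hnl
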